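/- arXiv:1108.0845 — 2 statements merged into one kernel-verified Lean document; each statement's English description precedes it below -/
import Mathlib

section
/- Let K be a skew field with a spherically complete valuation ν, let V be a finite-dimensional right K-vector space, let m > 0 be a real constant, and let ω : V → ℝ ∪ {∞} satisfy: (1) ω(x) = ∞ iff x = 0; (2) ω(x·l) = ω(x) + m·ν(l) for all x ∈ V and l ∈ K; (3) ω(−x) = ω(x) and ω(x + y) ≥ min(ω(x), ω(y)) for all x, y ∈ V. Then the metric space (V, d) with d(x,y) := 2^{−ω(x−y)} satisfies (MC′). -/
/-- `2 ^ (-a)` for `a ∈ ℝ ∪ {∞}`, with the convention `2 ^ (-∞) = 0`. -/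
noncomputable def toDist (a : WithTop ℝ) : ℝ :=
  WithTop.recTopCoe 0 (fun r : ℝ => (2 : ℝ) ^ (-r)) a

/-- Property (MC′) for a distance function `d` on `X`: every nested sequence of c-balls
(closed balls of positive radius) has nonempty intersection. -/
def MCprime {X : Type*} (d : X → X → ℝ) : Prop :=
  ∀ (c : ℕ → X) (r : ℕ → ℝ),
    (∀ n, 0 < r n) →
    (∀ n, {y | d (c (n + 1)) y ≤ r (n + 1)} ⊆ {y | d (c n) y ≤ r n}) →
    (⋂ n, {y | d (c n) y ≤ r n}).Nonempty

/-!
Induction on the dimension. Let `U` be the kernel of a nonzero functional `f`. Since `U` is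
spherically complete, every point has a best approximation in `U`, so `ω` attains its maximum on
the hyperplane `f = 1`, at `e` say. Then `a ↦ 2 ^ (-(ω e + m ν a))` is the quotient norm of
`V / U ≅ K`, attained on the line `e K`; it is spherically complete because `ν` is. A nested
sequence of balls in `V` projects to a nested sequence in `K`; over a common point `t` of these,
the ultrametric inequality turns the balls into a nested sequence of balls in the fibre
`f = t`, a translate of `U`, and a common point of those lies in all the original balls.
-/

@[simp] lemma toDist_top : toDist ⊤ = 0 := rfl

@[simp] lemma toDist_coe (r : ℝ) : toDist r = (2 : ℝ) ^ (-r) := rfl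

lemma toDist_nonneg (a : WithTop ℝ) : 0 ≤ toDist a := by
  induction a with
  | top => rfl
  | coe r => exact (Real.rpow_pos_of_pos two_pos _).le

lemma toDist_le_toDist {a b : WithTop ℝ} : toDist a ≤ toDist b ↔ b ≤ a := by
  induction a with
  | top => simpa using toDist_nonneg b
  | coe r =>
    induction b with
    | top => simpa using (by positivity : (0 : ℝ) < 2 ^ (-r))
    | coe s => simp [Real.rpow_le_rpow_left_iff one_lt_two]

lemma toDist_antitone : Antitone toDist := fun _ _ h => toDist_le_toDist.2 h

lemma toDist_coe_add_mul_le_iff {γ m r : ℝ} (hm : 0 < m) (hr : 0 < r) (x : WithTop ℝ) :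
    toDist (γ + m * x) ≤ r ↔ toDist x ≤ (r * 2 ^ γ) ^ m⁻¹ := by
  have h2γ : (0 : ℝ) < 2 ^ γ := by positivity
  induction x with
  | top =>
    rw [WithTop.mul_top (by exact_mod_cast hm.ne'), WithTop.add_top]
    simp only [toDist_top]
    exact iff_of_true hr.le (by positivity)
  | coe s =>
    rw [← WithTop.coe_mul, ← WithTop.coe_add, toDist_coe, toDist_coe,
      Real.le_rpow_inv_iff_of_pos (by positivity) (by positivity) hm,
      ← Real.rpow_mul zero_le_two, ← div_le_iff₀ h2γ, ← Real.rpow_sub two_pos]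
    ring_nf

lemma MCprime.of_le_iff {X : Type*} {d d' : X → X → ℝ} (hd : MCprime d) (ρ : ℝ → ℝ)
    (hρ : ∀ r, 0 < r → 0 < ρ r) (h : ∀ x y r, 0 < r → (d' x y ≤ r ↔ d x y ≤ ρ r)) :
    MCprime d' := by
  intro c r hr hnest
  have hball : ∀ n, {y | d' (c n) y ≤ r n} = {y | d (c n) y ≤ ρ (r n)} := fun n =>
    Set.ext fun y => h _ _ _ (hr n)
  simp only [hball] at hnest ⊢
  exact hd c (ρ ∘ r) (fun n => hρ _ (hr n)) hnest

section Nonarchimedean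

variable {G : Type*} [AddCommGroup G] {N : AddGroupSeminorm G}

lemma mcprime_of_subsingleton [Subsingleton G] :
    MCprime fun x y : G => N (x - y) :=
  fun c r hr _ => ⟨c 0, Set.mem_iInter.2 fun n => by
    simpa [Subsingleton.elim (c n) (c 0)] using (hr n).le⟩

lemma IsNonarchimedean.sub_le_max (hN : IsNonarchimedean N) (x y z : G) :
    N (x - z) ≤ max (N (x - y)) (N (y - z)) := by
  simpa using hN (x - y) (y - z)

theorem IsNonarchimedean.exists_forall_le_of_mcprime (hN : IsNonarchimedean N) {H : AddSubgroup G}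
    (hH : MCprime fun x y : H => N ((x : G) - y)) (v : G) :
    ∃ u ∈ H, ∀ w ∈ H, N (v - u) ≤ N (v - w) := by
  set D := ⨅ w : H, N (v - w)
  have hbdd : BddBelow (Set.range fun w : H => N (v - w)) := ⟨0, by
    rintro _ ⟨w, rfl⟩; exact apply_nonneg _ _⟩
  have hD : 0 ≤ D := le_ciInf fun _ => apply_nonneg _ _
  set r : ℕ → ℝ := fun n => D + 1 / (n + 1)
  have hr : ∀ n, 0 < r n := fun n => by positivity
  have hranti : Antitone r := fun m n hmn => by
    simp only [r, add_le_add_iff_left]; gcongr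
  -- balls of radius `D + 1 / (n + 1)` around near-best approximations contain `v`, so are nested
  choose c hc using fun n =>
    exists_lt_of_ciInf_lt (lt_add_of_pos_right D (Nat.one_div_pos_of_nat (n := n)))
  have hnest : ∀ n, {y : H | N (c (n + 1) - (y : G)) ≤ r (n + 1)} ⊆
      {y | N (c n - (y : G)) ≤ r n} := by
    intro n y hy
    calc N (c n - (y : G))
        ≤ max (N (c n - v)) (max (N (v - c (n + 1))) (N (c (n + 1) - (y : G)))) :=
          (hN.sub_le_max _ v _).trans (max_le_max le_rfl (hN.sub_le_max _ _ _))
      _ ≤ r n := by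
        rw [map_sub_rev]
        exact max_le (hc n).le
          (max_le ((hc _).le.trans (hranti n.le_succ)) (hy.trans (hranti n.le_succ)))
  obtain ⟨u, hu⟩ := hH c r hr hnest
  have hvu : ∀ n : ℕ, N (v - u) ≤ D + 1 / (n + 1) := fun n =>
    (hN.sub_le_max _ (c n) _).trans (max_le (hc n).le (Set.mem_iInter.1 hu n))
  refine ⟨u, u.2, fun w hw =>
    (le_of_forall_pos_lt_add fun ε hε => ?_).trans (ciInf_le hbdd ⟨w, hw⟩)⟩
  obtain ⟨n, hn⟩ := exists_nat_one_div_lt hε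
  linarith [hvu n]

lemma IsNonarchimedean.sub_le_iff_of_sub_le (hN : IsNonarchimedean N) {a b : G} {r : ℝ}
    (hab : N (a - b) ≤ r) (z : G) : N (a - z) ≤ r ↔ N (b - z) ≤ r :=
  ⟨fun h => (hN.sub_le_max b a z).trans (max_le (by rwa [map_sub_rev]) h),
    fun h => (hN.sub_le_max a b z).trans (max_le hab h)⟩

theorem IsNonarchimedean.mcprime_of_ker {Y : Type*} [AddCommGroup Y] (hN : IsNonarchimedean N)
    (π : G →+ Y) (M : Y → ℝ) (hle : ∀ x, M (π x) ≤ N x) (hlift : ∀ y, ∃ x, π x = y ∧ N x ≤ M y)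
    {H : AddSubgroup G} (hker : π.ker ≤ H) (hH : MCprime fun x y : H => N ((x : G) - y))
    (hY : MCprime fun a b : Y => M (a - b)) : MCprime fun x y : G => N (x - y) := by
  intro c r hr hnest
  have hnestY : ∀ n, {y | M (π (c (n + 1)) - y) ≤ r (n + 1)} ⊆ {y | M (π (c n) - y) ≤ r n} := by
    intro n y hy
    obtain ⟨w, hw, hwM⟩ := hlift (π (c (n + 1)) - y)
    have hz : N (c n - (c (n + 1) - w)) ≤ r n := hnest n (by simpa using hwM.trans hy)
    simpa [hw] using (hle _).trans hz
  obtain ⟨t, ht⟩ := hY (fun n => π (c n)) r hr hnestY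
  have hp : ∀ n, ∃ p, π p = t ∧ N (c n - p) ≤ r n := fun n => by
    obtain ⟨w, hw, hwM⟩ := hlift (π (c n) - t)
    exact ⟨c n - w, by simp [hw], by simpa using hwM.trans (Set.mem_iInter.1 ht n)⟩
  choose p hpt hpc using hp
  have hpH : ∀ n, p n - p 0 ∈ H := fun n => hker (by simp [AddMonoidHom.mem_ker, hpt])
  let u : ℕ → H := fun n => ⟨p n - p 0, hpH n⟩
  have hball : ∀ n (y : H), N ((u n : G) - y) ≤ r n ↔ N (c n - (p 0 + y)) ≤ r n := fun n y => by
    rw [hN.sub_le_iff_of_sub_le (hpc n), sub_sub]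
  obtain ⟨x, hx⟩ := hH u r hr fun n y hy => (hball n y).2 (hnest n ((hball (n + 1) y).1 hy))
  exact ⟨p 0 + x, Set.mem_iInter.2 fun n => (hball n x).1 (Set.mem_iInter.1 hx n)⟩

end Nonarchimedean

section ValuationNorm

open MulOpposite

variable {K V : Type*} [DivisionRing K] [AddCommGroup V] [Module Kᵐᵒᵖ V]

structure IsValuationNorm (ν : K → WithTop ℝ) (m : ℝ) (ω : V → WithTop ℝ) : Prop where
  eq_top_iff : ∀ x, ω x = ⊤ ↔ x = 0
  apply_op_smul : ∀ (x : V) (l : K), ω (op l • x) = ω x + m * ν l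
  apply_neg : ∀ x, ω (-x) = ω x
  min_le_apply_add : ∀ x y, min (ω x) (ω y) ≤ ω (x + y)

namespace IsValuationNorm

variable {ν : K → WithTop ℝ} {m : ℝ} {ω : V → WithTop ℝ} (hω : IsValuationNorm ν m ω)
include hω

lemma toDist_add_le_max (x y : V) : toDist (ω (x + y)) ≤ max (toDist (ω x)) (toDist (ω y)) := by
  rw [← toDist_antitone.map_min]
  exact toDist_antitone (hω.min_le_apply_add x y)

noncomputable def seminorm : AddGroupSeminorm V where
  toFun x := toDist (ω x)
  map_zero' := by simp [(hω.eq_top_iff 0).2 rfl]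
  add_le' x y := (hω.toDist_add_le_max x y).trans
    (max_le_add_of_nonneg (toDist_nonneg _) (toDist_nonneg _))
  neg' x := by rw [hω.apply_neg]

lemma seminorm_apply (x : V) : hω.seminorm x = toDist (ω x) := rfl

lemma isNonarchimedean_seminorm : IsNonarchimedean hω.seminorm := hω.toDist_add_le_max

lemma seminorm_smul_le_seminorm_smul {x y : V} (h : hω.seminorm x ≤ hω.seminorm y) (a : K) :
    hω.seminorm (op a • x) ≤ hω.seminorm (op a • y) := by
  simp only [seminorm_apply, hω.apply_op_smul, toDist_le_toDist] at h ⊢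
  gcongr

lemma restrict (p : Submodule Kᵐᵒᵖ V) : IsValuationNorm ν m fun x : p => ω x where
  eq_top_iff x := (hω.eq_top_iff x).trans ZeroMemClass.coe_eq_zero
  apply_op_smul x l := hω.apply_op_smul x l
  apply_neg x := hω.apply_neg x
  min_le_apply_add x y := hω.min_le_apply_add x y

lemma exists_min_seminorm_on_apply_eq_one (f : Module.Dual Kᵐᵒᵖ V) (hf : f ≠ 0)
    (hker : MCprime fun x y : LinearMap.ker f => hω.seminorm ((x : V) - y)) :
    ∃ e, f e = 1 ∧ ∀ x, f x = 1 → hω.seminorm e ≤ hω.seminorm x := by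
  obtain ⟨e₀, he₀⟩ := LinearMap.surjective hf 1
  obtain ⟨u, hu, hmin⟩ := hω.isNonarchimedean_seminorm.exists_forall_le_of_mcprime
    (H := (LinearMap.ker f).toAddSubgroup) hker e₀
  refine ⟨e₀ - u, by simpa [he₀] using hu, fun x hx => ?_⟩
  simpa using hmin (e₀ - x) (by simp [he₀, hx])

theorem mcprime_of_mcprime_ker (hm : 0 < m) (hν : MCprime fun x y : K => toDist (ν (x - y)))
    (f : Module.Dual Kᵐᵒᵖ V) (hf : f ≠ 0)
    (hker : MCprime fun x y : LinearMap.ker f => hω.seminorm ((x : V) - y)) :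
    MCprime fun x y : V => hω.seminorm (x - y) := by
  obtain ⟨e, hfe, he⟩ := hω.exists_min_seminorm_on_apply_eq_one f hf hker
  obtain ⟨γ, hγ⟩ := WithTop.ne_top_iff_exists.1 (show ω e ≠ ⊤ from fun h => by
    simp [(hω.eq_top_iff e).1 h] at hfe)
  -- by the maximality of `e`, `a ↦ ‖op a • e‖` is the quotient norm of `V ⧸ ker f ≃ K`
  let π : V →+ K := (opAddEquiv.symm : Kᵐᵒᵖ ≃+ K).toAddMonoidHom.comp f.toAddMonoidHom
  refine hω.isNonarchimedean_seminorm.mcprime_of_ker π (fun a => hω.seminorm (op a • e))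
    (fun x => ?_) (fun a => ⟨op a • e, by simp [π, hfe], le_rfl⟩)
    (H := (LinearMap.ker f).toAddSubgroup) (fun x hx => by simpa [π] using hx) hker ?_
  · obtain ha | ha := eq_or_ne (f x) 0
    · simp [π, ha]
    · have hx : op (π x) • (f x)⁻¹ • x = x := by simp [π, smul_inv_smul₀ ha]
      have hfx : f ((f x)⁻¹ • x) = 1 := by rw [map_smul, smul_eq_mul, inv_mul_cancel₀ ha]
      exact (hω.seminorm_smul_le_seminorm_smul (he _ hfx) (π x)).trans_eq (congrArg _ hx)
  · refine hν.of_le_iff (fun r => (r * 2 ^ γ) ^ m⁻¹) (fun r hr => by positivity) fun a b r hr => ?_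
    rw [seminorm_apply, hω.apply_op_smul, ← hγ]
    exact toDist_coe_add_mul_le_iff hm hr _

theorem mcprime [FiniteDimensional Kᵐᵒᵖ V] (hm : 0 < m)
    (hν : MCprime fun x y : K => toDist (ν (x - y))) :
    MCprime fun x y : V => hω.seminorm (x - y) := by
  induction h : Module.finrank Kᵐᵒᵖ V generalizing V with
  | zero =>
    have := Module.finrank_zero_iff.1 h
    exact mcprime_of_subsingleton
  | succ n ih =>
    let b := Module.finBasisOfFinrankEq Kᵐᵒᵖ V h
    have hf : b.coord 0 ≠ 0 := fun h0 => by simpa using LinearMap.congr_fun h0 (b 0)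
    refine hω.mcprime_of_mcprime_ker hm hν (b.coord 0) hf (ih (hω.restrict _) ?_)
    have := Module.Dual.finrank_ker_add_one_of_ne_zero hf
    omega

end IsValuationNorm

end ValuationNorm

theorem findim_MCprime_general {K V : Type*} [DivisionRing K]
    [AddCommGroup V] [Module Kᵐᵒᵖ V] [FiniteDimensional Kᵐᵒᵖ V]
    (ν : K → WithTop ℝ)
    (hνsph : MCprime (fun x y : K => toDist (ν (x - y))))
    (m : ℝ) (hm : 0 < m)
    (ω : V → WithTop ℝ)
    (hω1 : ∀ x : V, ω x = ⊤ ↔ x = 0)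
    (hω2 : ∀ (x : V) (l : K), ω (MulOpposite.op l • x) = ω x + (m : WithTop ℝ) * ν l)
    (hω3neg : ∀ x : V, ω (-x) = ω x)
    (hω3 : ∀ x y : V, min (ω x) (ω y) ≤ ω (x + y)) :
    MCprime (fun x y : V => toDist (ω (x - y))) :=
  IsValuationNorm.mcprime ⟨hω1, hω2, hω3neg, hω3⟩ hm hνsph

/-- Let `K` be a skew field with a spherically complete valuation `ν`, let
`V` be a finite-dimensional right `K`-vector space, `m > 0`, and let `ω : V → ℝ ∪ {∞}`
satisfy conditions (1)–(3). Then `(V, d)` with `d(x,y) = 2^{-ω(x-y)}` satisfies (MC′). -/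
theorem findim_MCprime {K V : Type*} [DivisionRing K]
    [AddCommGroup V] [Module Kᵐᵒᵖ V] [FiniteDimensional Kᵐᵒᵖ V]
    (ν : K → WithTop ℝ)
    (hν1 : ∀ x : K, ν x = ⊤ ↔ x = 0)
    (hνmul : ∀ x y : K, ν (x * y) = ν x + ν y)
    (hνadd : ∀ x y : K, min (ν x) (ν y) ≤ ν (x + y))
    (hνsph : MCprime (fun x y : K => toDist (ν (x - y))))
    (m : ℝ) (hm : 0 < m)
    (ω : V → WithTop ℝ)
    (hω1 : ∀ x : V, ω x = ⊤ ↔ x = 0)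
    (hω2 : ∀ (x : V) (l : K), ω (MulOpposite.op l • x) = ω x + (m : WithTop ℝ) * ν l)
    (hω3neg : ∀ x : V, ω (-x) = ω x)
    (hω3 : ∀ x y : V, min (ω x) (ω y) ≤ ω (x + y)) :
    MCprime (fun x y : V => toDist (ω (x - y))) :=
  findim_MCprime_general ν hνsph m hm ω hω1 hω2 hω3neg hω3
end

section
/- Let K be a field of characteristic 2 with a valuation ν, let K² = {x² : x ∈ K} be the subfield of squares, and let d(x,y) := 2^{−ν(x−y)}. Then the squaring map x ↦ x² maps each c-ball {y ∈ K : ν(y − x) ≥ s} bijectively onto the set {y ∈ K² : ν(y − x²) ≥ 2s}, which is the intersection with K² of a c-ball of K; consequently, (K, d) satisfies (MC′) if and only if the metric subspace (K², d|_{K²}) satisfies (MC′). -/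
/-- Property (MC′) for the metric subspace on `A ⊆ X` induced by `d`. -/
def MCprimeOn {X : Type*} (d : X → X → ℝ) (A : Set X) : Prop :=
  ∀ (c : ℕ → X) (r : ℕ → ℝ),
    (∀ n, c n ∈ A) → (∀ n, 0 < r n) →
    (∀ n, {y ∈ A | d (c (n + 1)) y ≤ r (n + 1)} ⊆ {y ∈ A | d (c n) y ≤ r n}) →
    (⋂ n, {y ∈ A | d (c n) y ≤ r n}).Nonempty

lemma toDist_le_iff (r : ℝ) (a : WithTop ℝ) :
    toDist a ≤ (2:ℝ) ^ (-r) ↔ (r : WithTop ℝ) ≤ a := by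
  cases a with
  | top =>
    simp only [toDist, WithTop.recTopCoe_top, le_top, iff_true]
    positivity
  | coe t =>
    simp only [toDist, WithTop.recTopCoe_coe, WithTop.coe_le_coe]
    rw [Real.rpow_le_rpow_left_iff one_lt_two, neg_le_neg_iff]

lemma toDist_add_self (a : WithTop ℝ) : toDist (a + a) = toDist a ^ 2 := by
  cases a with
  | top => simp [toDist]
  | coe t =>
    simp only [toDist, ← WithTop.coe_add, WithTop.recTopCoe_coe]
    rw [← Real.rpow_natCast ((2:ℝ) ^ (-t)) 2, ← Real.rpow_mul (by norm_num)]
    ring_nf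

lemma withTop_half_le {s : ℝ} {a : WithTop ℝ}
    (h : ((s : ℝ) : WithTop ℝ) + (s : ℝ) ≤ a + a) : ((s : ℝ) : WithTop ℝ) ≤ a := by
  cases a with
  | top => exact le_top
  | coe t =>
    rw [← WithTop.coe_add, ← WithTop.coe_add, WithTop.coe_le_coe] at h
    exact_mod_cast (by linarith : s ≤ t)

/-- Let `K` be a field of characteristic 2 with valuation `ν`, and let
`K² = {x² : x ∈ K}` be its subfield of squares. Then squaring maps the c-ball
`{y : ν (y - x) ≥ s}` bijectively onto `{y ∈ K² : ν (y - x²) ≥ 2s}`, which is the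
intersection with `K²` of a c-ball of `K`; consequently `(K, d)` satisfies (MC′) iff the
metric subspace `(K², d|_{K²})` does. -/
theorem squares_MCprime {K : Type*} [Field K] [CharP K 2]
    (ν : K → WithTop ℝ)
    (hν1 : ∀ x : K, ν x = ⊤ ↔ x = 0)
    (hνmul : ∀ x y : K, ν (x * y) = ν x + ν y)
    (hνadd : ∀ x y : K, min (ν x) (ν y) ≤ ν (x + y)) :
    (∀ (x : K) (s : ℝ),
      Set.BijOn (fun y : K => y ^ 2) {y : K | (s : WithTop ℝ) ≤ ν (y - x)}
        {y : K | y ∈ Set.range (fun z : K => z ^ 2) ∧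
          ((2 * s : ℝ) : WithTop ℝ) ≤ ν (y - x ^ 2)}) ∧
    (∀ (x : K) (s : ℝ),
      {y : K | ((2 * s : ℝ) : WithTop ℝ) ≤ ν (y - x ^ 2)} =
        {y : K | toDist (ν (x ^ 2 - y)) ≤ (2 : ℝ) ^ (-(2 * s))}) ∧
    (MCprime (fun x y : K => toDist (ν (x - y))) ↔
      MCprimeOn (fun x y : K => toDist (ν (x - y)))
        (Set.range (fun z : K => z ^ 2))) := by
  -- basic char-2 facts
  have hsubsq : ∀ a b : K, a ^ 2 - b ^ 2 = (a - b) * (a - b) := by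
    intro a b
    rw [CharTwo.sub_eq_add, CharTwo.sub_eq_add, CharTwo.add_mul_self]
    ring
  have hsq : ∀ a b : K, ν (a ^ 2 - b ^ 2) = ν (a - b) + ν (a - b) := by
    intro a b; rw [hsubsq, hνmul]
  have hinj : Function.Injective (fun z : K => z ^ 2) := by
    intro a b h
    have h0 : (a - b) * (a - b) = 0 := by
      rw [← hsubsq]; simpa [sub_eq_zero] using h
    have := mul_self_eq_zero.mp h0
    exact sub_eq_zero.mp this
  have hcomm : ∀ a b : K, a - b = b - a := by
    intro a b; rw [CharTwo.sub_eq_add, CharTwo.sub_eq_add, add_comm]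
  have htwos : ∀ s : ℝ, ((2 * s : ℝ) : WithTop ℝ) = (s : ℝ) + (s : ℝ) := by
    intro s; rw [← WithTop.coe_add]; norm_num [two_mul]
  -- key distance identity
  have hkey : ∀ a b : K, toDist (ν (a ^ 2 - b ^ 2)) = toDist (ν (a - b)) ^ 2 := by
    intro a b; rw [hsq, toDist_add_self]
  refine ⟨?_, ?_, ?_⟩
  · -- bijectivity
    intro x s
    refine ⟨?_, fun a _ b _ h => hinj h, ?_⟩
    · intro y hy
      refine ⟨⟨y, rfl⟩, ?_⟩
      rw [hsq y x, htwos]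
      exact add_le_add hy hy
    · rintro y ⟨⟨z, hz⟩, hle⟩
      refine ⟨z, ?_, hz⟩
      simp only [Set.mem_setOf_eq]
      apply withTop_half_le
      rw [← hsq z x, ← htwos]
      simpa [← hz] using hle
  · -- ball description
    intro x s
    ext y
    simp only [Set.mem_setOf_eq]
    rw [hcomm (x ^ 2) y, toDist_le_iff]
  · -- MC' transfer
    set d : K → K → ℝ := fun x y : K => toDist (ν (x - y)) with hd
    have hdsq : ∀ a b : K, d (a ^ 2) (b ^ 2) = d a b ^ 2 := fun a b => hkey a b
    constructor
    · intro H c r hcA hr hnest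
      choose b hb using hcA
      have hb' : ∀ n, b n ^ 2 = c n := fun n => hb n
      have key : ∀ n (y : K), d (c n) (y ^ 2) = d (b n) y ^ 2 := by
        intro n y; rw [← hb' n]; exact hdsq _ _
      have hball : ∀ n (y : K), d (b n) y ≤ Real.sqrt (r n) ↔ d (c n) (y ^ 2) ≤ r n := by
        intro n y
        rw [key, Real.le_sqrt (toDist_nonneg _) (hr n).le]
      obtain ⟨z, hz⟩ := H b (fun n => Real.sqrt (r n))
        (fun n => Real.sqrt_pos.mpr (hr n))
        (by
          intro n y hy
          simp only [Set.mem_setOf_eq] at hy ⊢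
          rw [hball] at hy ⊢
          exact (hnest n ⟨⟨y, rfl⟩, hy⟩).2)
      simp only [Set.mem_iInter, Set.mem_setOf_eq] at hz
      refine ⟨z ^ 2, ?_⟩
      simp only [Set.mem_iInter, Set.mem_setOf_eq]
      exact fun n => ⟨⟨z, rfl⟩, (hball n z).mp (hz n)⟩
    · intro H c r hr hnest
      have key : ∀ n (y : K), d ((c n) ^ 2) (y ^ 2) = d (c n) y ^ 2 := fun n y => hdsq _ _
      obtain ⟨w, hw⟩ := H (fun n => (c n) ^ 2) (fun n => r n ^ 2)
        (fun n => ⟨c n, rfl⟩)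
        (fun n => pow_pos (hr n) 2)
        (by
          rintro n y ⟨⟨z, hz⟩, hy⟩
          simp only at hz
          subst hz
          rw [key] at hy
          have hz' : d (c (n + 1)) z ≤ r (n + 1) :=
            (pow_le_pow_iff_left₀ (toDist_nonneg _) (hr (n + 1)).le two_ne_zero).mp hy
          have := hnest n hz'
          refine ⟨⟨z, rfl⟩, ?_⟩
          rw [key]
          exact pow_le_pow_left₀ (toDist_nonneg _) this 2)
      simp only [Set.mem_iInter, Set.mem_setOf_eq] at hw
      obtain ⟨⟨z, hz⟩, -⟩ := hw 0
      simp only at hz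
      subst hz
      refine ⟨z, ?_⟩
      simp only [Set.mem_iInter, Set.mem_setOf_eq]
      intro n
      have := (hw n).2
      rw [key] at this
      exact (pow_le_pow_iff_left₀ (toDist_nonneg _) (hr n).le two_ne_zero).mp this
end
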